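/- Let $p,q$ be positive coprime integers. Then the rational function $\lambda_{p,q}(u) = \frac{u^{pq}-1}{(u^p-1)(u^q-1)}$ equals $\frac{P(u)}{u-1}$ for some polynomial $P$ with integer coefficients such that $(u-1)$ does not divide $P$. Equivalently, $(u-1)(u^{pq}-1)$ is divisible by $(u^p-1)(u^q-1)$ in $\mathbb{Z}[u]$, and the quotient polynomial is not divisible by $u-1$. -/

import Mathlib

/-!
Factor everything into cyclotomic polynomials: `X ^ n - 1 = ∏_{d ∣ n} Φ_d`. Since `p` and `q`
are coprime, the divisor sets of `p` and `q` meet only in `1`, so `P` is the product of the `Φ_d`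
over the divisors `d` of `p * q` dividing neither `p` nor `q`. Such a `d` is not a prime power, hence
`Φ_d(1) = 1`, and so `P(1) = 1 ≠ 0`.
-/

open Polynomial

theorem Nat.Coprime.divisors_inter_divisors {a b : ℕ} (hab : a.Coprime b) (ha : a ≠ 0)
    (hb : b ≠ 0) : a.divisors ∩ b.divisors = {1} := by
  ext d
  simp only [Finset.mem_inter, Nat.mem_divisors, Finset.mem_singleton]
  constructor
  · rintro ⟨⟨hda, -⟩, hdb, -⟩
    exact Nat.eq_one_of_dvd_one (hab ▸ Nat.dvd_gcd hda hdb)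
  · rintro rfl
    exact ⟨⟨one_dvd _, ha⟩, one_dvd _, hb⟩

theorem Nat.divisors_union_divisors_subset_divisors_mul {a b : ℕ} (hab : a * b ≠ 0) :
    a.divisors ∪ b.divisors ⊆ (a * b).divisors :=
  Finset.union_subset (Nat.divisors_subset_of_dvd hab (dvd_mul_right a b))
    (Nat.divisors_subset_of_dvd hab (dvd_mul_left b a))

theorem eval_one_cyclotomic_of_not_dvd_of_not_dvd {R : Type*} [Ring R] {a b d : ℕ}
    (hab : a.Coprime b) (hd : d ∣ a * b) (hda : ¬ d ∣ a) (hdb : ¬ d ∣ b) :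
    eval 1 (cyclotomic d R) = 1 := by
  refine eval_one_cyclotomic_not_prime_pow fun {r} hr k hrk => ?_
  subst hrk
  rcases k.eq_zero_or_pos with rfl | hk
  · exact hda (pow_zero r ▸ one_dvd a)
  · have hpow : IsPrimePow (r ^ k) := (isPrimePow_nat_iff _).2 ⟨r, k, hr, hk, rfl⟩
    exact ((hab.isPrimePow_dvd_mul hpow).1 hd).elim hda hdb

/-- The numerator `P` in `λ_{p,q}(u) = P(u) / (u - 1)`. -/
noncomputable def lambdaNumerator (p q : ℕ) (R : Type*) [CommRing R] : R[X] :=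
  ∏ d ∈ (p * q).divisors \ (p.divisors ∪ q.divisors), cyclotomic d R

section lambdaNumerator

variable {p q : ℕ} (R : Type*) [CommRing R]

theorem X_pow_sub_one_mul_X_pow_sub_one_mul_lambdaNumerator (hp : 0 < p) (hq : 0 < q)
    (hpq : p.Coprime q) :
    ((X : R[X]) ^ p - 1) * (X ^ q - 1) * lambdaNumerator p q R = (X - 1) * (X ^ (p * q) - 1) := by
  have hpq0 : 0 < p * q := Nat.mul_pos hp hq
  rw [lambdaNumerator, ← prod_cyclotomic_eq_X_pow_sub_one hp,
    ← prod_cyclotomic_eq_X_pow_sub_one hq, ← prod_cyclotomic_eq_X_pow_sub_one hpq0,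
    ← Finset.prod_union_inter, hpq.divisors_inter_divisors hp.ne' hq.ne', Finset.prod_singleton,
    cyclotomic_one,
    ← Finset.prod_sdiff (Nat.divisors_union_divisors_subset_divisors_mul hpq0.ne')]
  ring

theorem eval_one_lambdaNumerator (hpq : p.Coprime q) : eval 1 (lambdaNumerator p q R) = 1 := by
  rw [lambdaNumerator, eval_prod]
  refine Finset.prod_eq_one fun d hd => ?_
  simp only [Finset.mem_sdiff, Finset.mem_union, Nat.mem_divisors, not_or] at hd
  obtain ⟨⟨hdpq, hpq0⟩, hdp, hdq⟩ := hd
  exact eval_one_cyclotomic_of_not_dvd_of_not_dvd hpq hdpq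
    (fun h => hdp ⟨h, left_ne_zero_of_mul hpq0⟩)
    (fun h => hdq ⟨h, right_ne_zero_of_mul hpq0⟩)

end lambdaNumerator

/-- For positive coprime integers `p, q`, the rational function
`λ_{p,q}(u) = (u^{pq}-1)/((u^p-1)(u^q-1))` equals `P(u)/(u-1)` for a polynomial `P`
over `ℤ` not divisible by `u - 1`; i.e. `(u^p-1)(u^q-1) ∣ (u-1)(u^{pq}-1)` in `ℤ[u]`
with quotient not divisible by `u - 1`. -/
theorem lambda_pq_eq_poly_div (p q : ℕ) (hp : 0 < p) (hq : 0 < q)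
    (hpq : Nat.Coprime p q) :
    ∃ P : Polynomial ℤ,
      ((X : Polynomial ℤ) ^ p - 1) * (X ^ q - 1) * P = (X - 1) * (X ^ (p * q) - 1) ∧
      ¬ (X - 1 ∣ P) := by
  refine ⟨lambdaNumerator p q ℤ,
    X_pow_sub_one_mul_X_pow_sub_one_mul_lambdaNumerator ℤ hp hq hpq, ?_⟩
  rw [← C_1, dvd_iff_isRoot, IsRoot, eval_one_lambdaNumerator ℤ hpq]
  exact one_ne_zero
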